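/- Fix an integer n ≥ 2, γ with 1 < γ ≤ 2, a rate r > 0, and a survival function t ↦ ₜp_x : [0,∞) → (0,1] which is continuous, strictly decreasing, with ₀p_x = 1, ₜp_x < 1 for t > 0, and ₜp_x → 0 as t → ∞. Set c₀ = (∫_0^∞ e^{−rt} ₜp_x dt)^{−1} and define the indifference loading δ by (1−δ)^{1−γ} c₀^{−γ} = (∫_0^∞ e^{−rt} β_{n,γ}(ₜp_x)^{1/γ} dt)^γ, i.e. δ = 1 − (c₀ ∫_0^∞ e^{−rt} β_{n,γ}(ₜp_x)^{1/γ} dt)^{γ/(1−γ)}. Then δ < (1/n)·(c₀/r − 1). (Note that c₀ > r, since ∫_0^∞ e^{−rt} ₜp_x dt < 1/r.) -/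

import Mathlib

open MeasureTheory Real Finset

/-- `theta n γ p = E[(n/N(p))^{1-γ}]` where `N(p)-1 ~ Bin(n-1,p)`. -/
noncomputable def theta (n : ℕ) (γ p : ℝ) : ℝ :=
  ∑ k ∈ Finset.range n,
    ((n - 1).choose k : ℝ) * p ^ k * (1 - p) ^ (n - 1 - k) *
      ((n : ℝ) / ((k : ℝ) + 1)) ^ (1 - γ)

/-- `beta n γ p = p * theta n γ p`. -/
noncomputable def beta (n : ℕ) (γ p : ℝ) : ℝ := p * theta n γ p

/-- Optimal tontine payout function. -/
noncomputable def Dopt (n : ℕ) (γ r : ℝ) (p : ℝ → ℝ) (t : ℝ) : ℝ :=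
  beta n γ (p t) ^ (1 / γ) /
    ∫ s in Set.Ioi (0 : ℝ), Real.exp (-r * s) * beta n γ (p s) ^ (1 / γ)

/-- Cumulative discounted payout of the optimal tontine. -/
noncomputable def Delta (n : ℕ) (γ r : ℝ) (p : ℝ → ℝ) (t : ℝ) : ℝ :=
  ∫ s in (0 : ℝ)..t, Real.exp (-r * s) * Dopt n γ r p s

/-!
Write `n = m + 1`. Since `0 < γ - 1 ≤ 1`, Jensen's inequality for the concave map `x ↦ x ^ (γ - 1)`
under the binomial law gives `θ(q) ≤ A ^ (γ - 1)` with `A = (m q + 1) / (m + 1)`, and then the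
strict weighted AM-GM inequality with weights `1/γ`, `1 - 1/γ` gives, for `0 < q < 1`,
`β(q) ^ (1/γ) ≤ q ^ (1/γ) A ^ (1 - 1/γ) < q + (γ - 1)/γ · (1 - q)/n`.
Integrating against `e^{-rt}` with `q = ₜp_x` yields `I < J + (γ - 1)/γ · (1/r - J)/n`, where
`I = ∫ e^{-rt} β(ₜp_x)^{1/γ}` and `J = ∫ e^{-rt} ₜp_x = 1/c₀`. Finally the tangent-line bound
`x ^ s ≥ 1 + s (x - 1)` for `s = γ/(1 - γ) < 0` gives `δ ≤ γ/(γ - 1) · c₀ (I - J)`.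
-/

lemma bernsteinPolynomial_eval (m k : ℕ) (q : ℝ) :
    (bernsteinPolynomial ℝ m k).eval q = m.choose k * q ^ k * (1 - q) ^ (m - k) := by
  simp [bernsteinPolynomial]

lemma bernsteinPolynomial_eval_nonneg (m k : ℕ) {q : ℝ} (hq₀ : 0 ≤ q) (hq₁ : q ≤ 1) :
    0 ≤ (bernsteinPolynomial ℝ m k).eval q := by
  rw [bernsteinPolynomial_eval]
  have : 0 ≤ 1 - q := by linarith
  positivity

lemma sum_bernsteinPolynomial_eval (m : ℕ) (q : ℝ) :
    ∑ k ∈ range (m + 1), (bernsteinPolynomial ℝ m k).eval q = 1 := by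
  simpa [Polynomial.eval_finsetSum] using
    congrArg (Polynomial.eval q) (bernsteinPolynomial.sum ℝ m)

lemma sum_bernsteinPolynomial_eval_mul (m : ℕ) (q : ℝ) :
    ∑ k ∈ range (m + 1), (bernsteinPolynomial ℝ m k).eval q * k = m * q := by
  simpa [Polynomial.eval_finsetSum, mul_comm] using
    congrArg (Polynomial.eval q) (bernsteinPolynomial.sum_smul ℝ m)

lemma theta_succ_eq (m : ℕ) (γ q : ℝ) :
    theta (m + 1) γ q = ∑ k ∈ range (m + 1),
      (bernsteinPolynomial ℝ m k).eval q * (((k : ℝ) + 1) / (m + 1)) ^ (γ - 1) := by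
  refine sum_congr rfl fun k _ => ?_
  rw [bernsteinPolynomial_eval, Nat.add_sub_cancel, Nat.cast_succ, ← inv_div,
    inv_rpow (by positivity), ← rpow_neg (by positivity), neg_sub]

lemma theta_succ_le (m : ℕ) {γ q : ℝ} (hγ₁ : 1 ≤ γ) (hγ₂ : γ ≤ 2) (hq₀ : 0 ≤ q) (hq₁ : q ≤ 1) :
    theta (m + 1) γ q ≤ ((m * q + 1) / (m + 1)) ^ (γ - 1) := by
  have hmean : ∑ k ∈ range (m + 1),
      (bernsteinPolynomial ℝ m k).eval q * (((k : ℝ) + 1) / (m + 1)) = (m * q + 1) / (m + 1) := by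
    simp only [← mul_div_assoc, ← sum_div, mul_add, mul_one, sum_add_distrib,
      sum_bernsteinPolynomial_eval_mul, sum_bernsteinPolynomial_eval]
  rw [theta_succ_eq, ← hmean]
  exact (concaveOn_rpow (by linarith) (by linarith)).le_map_sum
    (fun k _ => bernsteinPolynomial_eval_nonneg m k hq₀ hq₁) (sum_bernsteinPolynomial_eval m q)
    (fun k _ => Set.mem_Ici.2 (by positivity))

lemma beta_pos {n : ℕ} (hn : n ≠ 0) (γ : ℝ) {q : ℝ} (hq₀ : 0 < q) (hq₁ : q ≤ 1) :
    0 < beta n γ q := by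
  obtain ⟨m, rfl⟩ := Nat.exists_eq_succ_of_ne_zero hn
  refine mul_pos hq₀ ?_
  rw [theta_succ_eq]
  refine sum_pos' (fun k _ => mul_nonneg (bernsteinPolynomial_eval_nonneg m k hq₀.le hq₁)
    (by positivity)) ⟨m, self_mem_range_succ m, ?_⟩
  rw [bernsteinPolynomial_eval, Nat.choose_self, Nat.sub_self]
  positivity

lemma continuous_beta (n : ℕ) (γ : ℝ) : Continuous (beta n γ) := by
  unfold beta theta
  fun_prop

lemma beta_rpow_one_div_lt {n : ℕ} (hn : n ≠ 0) {γ q : ℝ} (hγ₁ : 1 < γ) (hγ₂ : γ ≤ 2)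
    (hq₀ : 0 < q) (hq₁ : q < 1) :
    beta n γ q ^ (1 / γ) < q + (γ - 1) / γ * (1 / n) * (1 - q) := by
  obtain ⟨m, rfl⟩ := Nat.exists_eq_succ_of_ne_zero hn
  have hγ₀ : 0 < γ := by linarith
  set A : ℝ := (m * q + 1) / (m + 1) with hA
  have hA₀ : 0 < A := by positivity
  have hqA : q < A := by rw [hA, lt_div_iff₀ (by positivity)]; nlinarith
  have hβ : beta (m + 1) γ q ≤ q * A ^ (γ - 1) :=
    mul_le_mul_of_nonneg_left (theta_succ_le m hγ₁.le hγ₂ hq₀.le hq₁.le) hq₀.le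
  calc beta (m + 1) γ q ^ (1 / γ)
      ≤ (q * A ^ (γ - 1)) ^ (1 / γ) :=
        rpow_le_rpow (beta_pos hn γ hq₀ hq₁.le).le hβ (by positivity)
    _ = q ^ (1 / γ) * A ^ ((γ - 1) / γ) := by
        rw [mul_rpow hq₀.le (by positivity), ← rpow_mul hA₀.le, mul_one_div]
    _ < 1 / γ * q + (γ - 1) / γ * A :=
        (geom_mean_lt_arith_mean2_weighted_iff_of_pos (by positivity)
          (div_pos (by linarith) hγ₀) hq₀.le hA₀.le (by field_simp; ring)).2 hqA.ne
    _ = q + (γ - 1) / γ * (1 / ↑(m + 1)) * (1 - q) := by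
        rw [hA]; push_cast; field_simp; ring

lemma one_add_mul_sub_one_le_rpow {x s : ℝ} (hx : 0 < x) (hs : s ≤ 0) :
    1 + s * (x - 1) ≤ x ^ s :=
  calc 1 + s * (x - 1) ≤ s * log x + 1 := by nlinarith [log_le_sub_one_of_pos hx]
    _ ≤ exp (s * log x) := add_one_le_exp _
    _ = x ^ s := by rw [rpow_def_of_pos hx, mul_comm]

lemma one_sub_rpow_lt_of_lt_add {n γ r c J I : ℝ} (hn : 0 < n) (hγ : 1 < γ) (hc : c * J = 1)
    (hJ : 0 < J) (hI : 0 < I) (hIJ : I < J + (γ - 1) / γ * (1 / n) * (1 / r - J)) :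
    1 - (c * I) ^ (γ / (1 - γ)) < 1 / n * (c / r - 1) := by
  have hc₀ : 0 < c := pos_of_mul_pos_left (hc ▸ one_pos) hJ.le
  have hs : γ / (1 - γ) = -(γ / (γ - 1)) := by rw [← div_neg, neg_sub]
  have hk : 0 < γ / (γ - 1) := div_pos (by linarith) (by linarith)
  have hbern := one_add_mul_sub_one_le_rpow (mul_pos hc₀ hI) (hs ▸ neg_nonpos.2 hk.le)
  have hgap : c * I - 1 < c * ((γ - 1) / γ * (1 / n) * (1 / r - J)) :=
    calc c * I - 1 = c * (I - J) := by rw [mul_sub, hc]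
      _ < _ := mul_lt_mul_of_pos_left (by linarith) hc₀
  calc 1 - (c * I) ^ (γ / (1 - γ)) ≤ γ / (γ - 1) * (c * I - 1) := by rw [hs] at hbern ⊢; linarith
    _ < γ / (γ - 1) * (c * ((γ - 1) / γ * (1 / n) * (1 / r - J))) :=
        mul_lt_mul_of_pos_left hgap hk
    _ = 1 / n * (c / r - c * J) := by field_simp [(by linarith : γ - 1 ≠ 0)]
    _ = 1 / n * (c / r - 1) := by rw [hc]

lemma setIntegral_lt_setIntegral_of_forall_lt {X : Type*} [MeasurableSpace X] {μ : Measure X}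
    {s : Set X} {f g : X → ℝ} (hs : MeasurableSet s) (hμ : μ s ≠ 0)
    (hf : IntegrableOn f s μ) (hg : IntegrableOn g s μ) (hlt : ∀ x ∈ s, f x < g x) :
    ∫ x in s, f x ∂μ < ∫ x in s, g x ∂μ := by
  rw [← sub_pos, ← integral_sub hg hf, setIntegral_pos_iff_support_of_nonneg_ae
    ((ae_restrict_iff' hs).2 (.of_forall fun x hx => sub_nonneg.2 (hlt x hx).le)) (hg.sub hf)]
  convert pos_iff_ne_zero.2 hμ using 2
  exact Set.inter_eq_right.2 fun x hx => (sub_pos.2 (hlt x hx)).ne'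

lemma setIntegral_pos_of_forall_pos {X : Type*} [MeasurableSpace X] {μ : Measure X}
    {s : Set X} {f : X → ℝ} (hs : MeasurableSet s) (hμ : μ s ≠ 0)
    (hf : IntegrableOn f s μ) (hpos : ∀ x ∈ s, 0 < f x) : 0 < ∫ x in s, f x ∂μ := by
  simpa using setIntegral_lt_setIntegral_of_forall_lt hs hμ integrableOn_zero hf hpos

lemma integral_exp_neg_mul_Ioi {r : ℝ} (hr : 0 < r) :
    ∫ t in Set.Ioi (0 : ℝ), exp (-r * t) = 1 / r := by
  rw [integral_exp_mul_Ioi (by linarith), mul_zero, exp_zero, div_neg, neg_div, neg_neg]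

lemma exp_neg_mul_affine_survival_eq (r κ : ℝ) (p : ℝ → ℝ) :
    (fun t => exp (-r * t) * (p t + κ * (1 - p t))) =
      fun t => exp (-r * t) * p t + κ * (exp (-r * t) - exp (-r * t) * p t) := by
  funext t
  ring

section Survival

variable {n : ℕ} {γ r : ℝ} {p : ℝ → ℝ}

lemma integrableOn_exp_neg_mul_survival (hr : 0 < r) (hcont : Continuous p)
    (hp : ∀ t ∈ Set.Ioi (0 : ℝ), p t ∈ Set.Ioo 0 1) :
    IntegrableOn (fun t => exp (-r * t) * p t) (Set.Ioi 0) :=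
  (exp_neg_integrableOn_Ioi 0 hr).mul_bdd hcont.aestronglyMeasurable
    ((ae_restrict_iff' measurableSet_Ioi).2 (.of_forall fun t ht => by
      rw [norm_of_nonneg (hp t ht).1.le]; exact (hp t ht).2.le))

lemma integrableOn_exp_neg_mul_sub_survival (hr : 0 < r) (hcont : Continuous p)
    (hp : ∀ t ∈ Set.Ioi (0 : ℝ), p t ∈ Set.Ioo 0 1) (κ : ℝ) :
    IntegrableOn (fun t => κ * (exp (-r * t) - exp (-r * t) * p t)) (Set.Ioi 0) :=
  ((exp_neg_integrableOn_Ioi 0 hr).sub (integrableOn_exp_neg_mul_survival hr hcont hp)).const_mul κ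

lemma integrableOn_exp_neg_mul_affine_survival (hr : 0 < r) (hcont : Continuous p)
    (hp : ∀ t ∈ Set.Ioi (0 : ℝ), p t ∈ Set.Ioo 0 1) (κ : ℝ) :
    IntegrableOn (fun t => exp (-r * t) * (p t + κ * (1 - p t))) (Set.Ioi 0) := by
  rw [exp_neg_mul_affine_survival_eq]
  exact (integrableOn_exp_neg_mul_survival hr hcont hp).add
    (integrableOn_exp_neg_mul_sub_survival hr hcont hp κ)

lemma setIntegral_exp_neg_mul_affine_survival (hr : 0 < r) (hcont : Continuous p)
    (hp : ∀ t ∈ Set.Ioi (0 : ℝ), p t ∈ Set.Ioo 0 1) (κ : ℝ) :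
    ∫ t in Set.Ioi (0 : ℝ), exp (-r * t) * (p t + κ * (1 - p t)) =
      (∫ t in Set.Ioi (0 : ℝ), exp (-r * t) * p t) +
        κ * (1 / r - ∫ t in Set.Ioi (0 : ℝ), exp (-r * t) * p t) := by
  have hJ := integrableOn_exp_neg_mul_survival hr hcont hp
  rw [exp_neg_mul_affine_survival_eq, integral_add hJ
    (integrableOn_exp_neg_mul_sub_survival hr hcont hp κ), integral_const_mul,
    integral_sub (exp_neg_integrableOn_Ioi 0 hr) hJ, integral_exp_neg_mul_Ioi hr]

lemma exp_neg_mul_beta_rpow_lt (hn : n ≠ 0) (hγ₁ : 1 < γ) (hγ₂ : γ ≤ 2)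
    (hp : ∀ t ∈ Set.Ioi (0 : ℝ), p t ∈ Set.Ioo 0 1) {t : ℝ} (ht : t ∈ Set.Ioi 0) :
    exp (-r * t) * beta n γ (p t) ^ (1 / γ) <
      exp (-r * t) * (p t + (γ - 1) / γ * (1 / n) * (1 - p t)) :=
  mul_lt_mul_of_pos_left (beta_rpow_one_div_lt hn hγ₁ hγ₂ (hp t ht).1 (hp t ht).2) (exp_pos _)

lemma exp_neg_mul_beta_rpow_pos (hn : n ≠ 0) (γ : ℝ)
    (hp : ∀ t ∈ Set.Ioi (0 : ℝ), p t ∈ Set.Ioo 0 1) {t : ℝ} (ht : t ∈ Set.Ioi 0) :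
    0 < exp (-r * t) * beta n γ (p t) ^ (1 / γ) :=
  mul_pos (exp_pos _) (rpow_pos_of_pos (beta_pos hn γ (hp t ht).1 (hp t ht).2.le) _)

lemma integrableOn_exp_neg_mul_beta_rpow (hn : n ≠ 0) (hγ₁ : 1 < γ) (hγ₂ : γ ≤ 2)
    (hr : 0 < r) (hcont : Continuous p) (hp : ∀ t ∈ Set.Ioi (0 : ℝ), p t ∈ Set.Ioo 0 1) :
    IntegrableOn (fun t => exp (-r * t) * beta n γ (p t) ^ (1 / γ)) (Set.Ioi 0) :=
  (integrableOn_exp_neg_mul_affine_survival hr hcont hp _).mono'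
    ((continuous_exp.comp (by fun_prop)).mul (((continuous_beta n γ).comp hcont).rpow_const
      fun _ => Or.inr (by positivity))).aestronglyMeasurable
    ((ae_restrict_iff' measurableSet_Ioi).2 (.of_forall fun t ht => by
      rw [norm_of_nonneg (exp_neg_mul_beta_rpow_pos hn γ hp ht).le]
      exact (exp_neg_mul_beta_rpow_lt hn hγ₁ hγ₂ hp ht).le))

end Survival

theorem indifference_loading_bound_general
    (n : ℕ) (hn : 2 ≤ n) (γ : ℝ) (hγ1 : 1 < γ) (hγ2 : γ ≤ 2)
    (r : ℝ) (hr : 0 < r)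
    (p : ℝ → ℝ) (hcont : Continuous p)
    (hmem : ∀ t, 0 ≤ t → p t ∈ Set.Ioc (0 : ℝ) 1)
    (hlt1 : ∀ t, 0 < t → p t < 1)
    (c₀ : ℝ) (hc₀ : c₀ = (∫ t in Set.Ioi (0 : ℝ), Real.exp (-r * t) * p t)⁻¹)
    (δ : ℝ)
    (hδ : δ = 1 -
      (c₀ * ∫ t in Set.Ioi (0 : ℝ), Real.exp (-r * t) * beta n γ (p t) ^ (1 / γ)) ^
        (γ / (1 - γ))) :
    δ < (1 / (n : ℝ)) * (c₀ / r - 1) := by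
  have hn₀ : n ≠ 0 := by omega
  have hp : ∀ t ∈ Set.Ioi (0 : ℝ), p t ∈ Set.Ioo 0 1 := fun t ht => ⟨(hmem t ht.le).1, hlt1 t ht⟩
  have hvol : volume (Set.Ioi (0 : ℝ)) ≠ 0 := by simp
  have hJint := integrableOn_exp_neg_mul_survival hr hcont hp
  have hIint := integrableOn_exp_neg_mul_beta_rpow hn₀ hγ1 hγ2 hr hcont hp
  have hJpos := setIntegral_pos_of_forall_pos measurableSet_Ioi hvol hJint
    fun t ht => mul_pos (exp_pos (-r * t)) (hp t ht).1
  have hIpos := setIntegral_pos_of_forall_pos measurableSet_Ioi hvol hIint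
    fun t => exp_neg_mul_beta_rpow_pos hn₀ γ hp
  have hIJ := setIntegral_lt_setIntegral_of_forall_lt measurableSet_Ioi hvol hIint
    (integrableOn_exp_neg_mul_affine_survival hr hcont hp _)
    fun t => exp_neg_mul_beta_rpow_lt hn₀ hγ1 hγ2 hp
  rw [setIntegral_exp_neg_mul_affine_survival hr hcont hp] at hIJ
  rw [hδ]
  exact one_sub_rpow_lt_of_lt_add (by positivity) hγ1 (hc₀ ▸ inv_mul_cancel₀ hJpos.ne')
    hJpos hIpos hIJ

/-- for `1 < γ ≤ 2`, the indifference annuity loading `δ` satisfies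
`δ < (1/n)(c₀/r - 1)`. -/
theorem indifference_loading_bound
    (n : ℕ) (hn : 2 ≤ n) (γ : ℝ) (hγ1 : 1 < γ) (hγ2 : γ ≤ 2)
    (r : ℝ) (hr : 0 < r)
    (p : ℝ → ℝ) (hcont : Continuous p) (hanti : StrictAntiOn p (Set.Ici 0))
    (hmem : ∀ t, 0 ≤ t → p t ∈ Set.Ioc (0 : ℝ) 1) (hp0 : p 0 = 1)
    (hlt1 : ∀ t, 0 < t → p t < 1)
    (hlim : Filter.Tendsto p Filter.atTop (nhds 0))
    (c₀ : ℝ) (hc₀ : c₀ = (∫ t in Set.Ioi (0 : ℝ), Real.exp (-r * t) * p t)⁻¹)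
    (δ : ℝ)
    (hδ : δ = 1 -
      (c₀ * ∫ t in Set.Ioi (0 : ℝ), Real.exp (-r * t) * beta n γ (p t) ^ (1 / γ)) ^
        (γ / (1 - γ))) :
    δ < (1 / (n : ℝ)) * (c₀ / r - 1) :=
  indifference_loading_bound_general n hn γ hγ1 hγ2 r hr p hcont hmem hlt1 c₀ hc₀ δ hδ
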